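/- arXiv:2304.11652 — 5 statements merged into one kernel-verified Lean document; each statement's English description precedes it below -/
import Mathlib

section
/- (Prefix Extension) Let ℘φ be an ADIF formula where ℘ is a quantifier prefix and φ an arbitrary ADIF formula. Then for every alternation flag α ∈ {∃∀,∀∃} and every hyperteam 𝕏 over a superset of sup(℘φ): 𝔄, 𝕏 ⊨^α ℘φ iff 𝔄, ext^α(𝕏, ℘) ⊨^α φ. -/
open scoped Classical

namespace ADIF

/-- A relational first-order structure over a signature given by relation
symbols `RSym` with arities `ar`. -/
structure Struct (RSym : Type) (ar : RSym → ℕ) where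
  A : Type
  nonempty : Nonempty A
  interp : ∀ R : RSym, (Fin (ar R) → A) → Prop

variable {Var RSym : Type} {ar : RSym → ℕ} {A : Type}

/-- Partial assignments from variables to values. -/
abbrev Asg (Var A : Type) := Var → Option A

/-- Teams of assignments. -/
abbrev Team (Var A : Type) := Set (Asg Var A)

/-- Hyperteams: sets of teams. -/
abbrev Hyperteam (Var A : Type) := Set (Team Var A)

/-- The empty assignment. -/
def emptyAsg (Var A : Type) : Asg Var A := fun _ => none

/-- Domain of a partial assignment. -/
def dom (α : Asg Var A) : Set Var := {v | α v ≠ none}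

/-- Restriction of an assignment to a set of variables. -/
noncomputable def restrictA (α : Asg Var A) (W : Set Var) : Asg Var A :=
  fun v => if v ∈ W then α v else none

/-- Restriction of a team. -/
noncomputable def restrictT (X : Team Var A) (W : Set Var) : Team Var A :=
  (fun α => restrictA α W) '' X

/-- Restriction of a hyperteam. -/
noncomputable def restrictH (𝕏 : Hyperteam Var A) (W : Set Var) : Hyperteam Var A :=
  (fun X => restrictT X W) '' 𝕏

/-- The preorder `⊑` on hyperteams. -/
def incl (𝕏₁ 𝕏₂ : Hyperteam Var A) : Prop :=
  ∀ X₁ ∈ 𝕏₁, ∃ X₂ ∈ 𝕏₂, X₂ ⊆ X₁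

/-- The equivalence `≡` on hyperteams. -/
def equivH (𝕏₁ 𝕏₂ : Hyperteam Var A) : Prop :=
  incl 𝕏₁ 𝕏₂ ∧ incl 𝕏₂ 𝕏₁

/-- The preorder `⊑_W` on hyperteams, relativized to variables in `W`. -/
noncomputable def inclW (W : Set Var) (𝕏₁ 𝕏₂ : Hyperteam Var A) : Prop :=
  incl (restrictH 𝕏₁ W) (restrictH 𝕏₂ W)

/-- The equivalence `≡_W` on hyperteams, relativized to variables in `W`. -/
noncomputable def equivW (W : Set Var) (𝕏₁ 𝕏₂ : Hyperteam Var A) : Prop :=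
  equivH (restrictH 𝕏₁ W) (restrictH 𝕏₂ W)

/-- The dual hyperteam `𝕏~`: the set of images of all choice functions for `𝕏`. -/
def dualH (𝕏 : Hyperteam Var A) : Hyperteam Var A :=
  {Y | ∃ χ : Team Var A → Asg Var A, (∀ X ∈ 𝕏, χ X ∈ X) ∧ Y = χ '' 𝕏}

/-- A hyperteam is proper if it is neither empty nor null. -/
def Proper (𝕏 : Hyperteam Var A) : Prop := 𝕏 ≠ ∅ ∧ ∅ ∉ 𝕏

/-- All assignments in all teams of `𝕏` are defined exactly on `U`. -/
def HyperteamOn (𝕏 : Hyperteam Var A) (U : Set Var) : Prop :=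
  ∀ X ∈ 𝕏, ∀ α ∈ X, dom α = U

/-- `𝕏` is a genuine hyperteam: all its assignments share the same domain. -/
def IsHyperteam (𝕏 : Hyperteam Var A) : Prop := ∃ U : Set Var, HyperteamOn 𝕏 U

/-- `𝕏` is a hyperteam over some superset of `V`. -/
def OverSup (𝕏 : Hyperteam Var A) (V : Set Var) : Prop :=
  ∃ U : Set Var, V ⊆ U ∧ HyperteamOn 𝕏 U

/-- `W`-uniform functions from assignments to values. -/
def FW (W : Set Var) : Set (Asg Var A → A) :=
  {F | ∀ α : Asg Var A, F α = F (restrictA α W)}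

/-- Update of an assignment at a variable. -/
noncomputable def updateA (α : Asg Var A) (x : Var) (a : A) : Asg Var A :=
  fun v => if v = x then some a else α v

/-- Extension of an assignment by a function for a variable. -/
noncomputable def extA (α : Asg Var A) (F : Asg Var A → A) (x : Var) : Asg Var A :=
  updateA α x (F α)

/-- Extension of a team by a function for a variable. -/
noncomputable def extT (X : Team Var A) (F : Asg Var A → A) (x : Var) : Team Var A :=
  (fun α => extA α F x) '' X

/-- Extension of a hyperteam with a variable, `W`-uniformly. -/
noncomputable def extH (W : Set Var) (𝕏 : Hyperteam Var A) (x : Var) : Hyperteam Var A :=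
  {Y | ∃ X ∈ 𝕏, ∃ F ∈ FW W, Y = extT X F x}

/-- Bipartitions of a hyperteam. -/
def Bipartition (𝕏₁ 𝕏₂ 𝕏 : Hyperteam Var A) : Prop :=
  𝕏₁ ∩ 𝕏₂ = ∅ ∧ 𝕏₁ ∪ 𝕏₂ = 𝕏

/-- Cylindrification of a team with respect to a variable. -/
noncomputable def cylT (X : Team Var A) (x : Var) : Team Var A :=
  {β | ∃ α ∈ X, ∃ a : A, β = updateA α x a}

/-- Cylindrification of a hyperteam with respect to a variable. -/
noncomputable def cylH (𝕏 : Hyperteam Var A) (x : Var) : Hyperteam Var A :=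
  (fun X => cylT X x) '' 𝕏

/-- ADIF formulas over variables `Var` and a relational signature. -/
inductive Formula (Var RSym : Type) (ar : RSym → ℕ) : Type
  | fls : Formula Var RSym ar
  | tru : Formula Var RSym ar
  | atom (R : RSym) (xs : Fin (ar R) → Var) : Formula Var RSym ar
  | not (φ : Formula Var RSym ar) : Formula Var RSym ar
  | and (φ ψ : Formula Var RSym ar) : Formula Var RSym ar
  | or (φ ψ : Formula Var RSym ar) : Formula Var RSym ar
  | ex (s : Bool) (W : Finset Var) (x : Var) (φ : Formula Var RSym ar) : Formula Var RSym ar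
  | all (s : Bool) (W : Finset Var) (x : Var) (φ : Formula Var RSym ar) : Formula Var RSym ar

/-- The constraint set `⟦±W⟧`: `W` itself for `+` (`s = true`),
its complement for `−` (`s = false`). -/
def denot (s : Bool) (W : Finset Var) : Set Var :=
  if s then (↑W : Set Var) else (↑W : Set Var)ᶜ

/-- Support variables of an ADIF formula. -/
def supv : Formula Var RSym ar → Set Var
  | .fls => ∅
  | .tru => ∅
  | .atom _ xs => Set.range xs
  | .not φ => supv φ
  | .and φ ψ => supv φ ∪ supv ψ
  | .or φ ψ => supv φ ∪ supv ψ
  | .ex _ _ x φ => supv φ \ {x}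
  | .all _ _ x φ => supv φ \ {x}

/-- Free variables of an ADIF formula. -/
noncomputable def freev : Formula Var RSym ar → Set Var
  | .fls => ∅
  | .tru => ∅
  | .atom _ xs => Set.range xs
  | .not φ => freev φ
  | .and φ ψ => freev φ ∪ freev ψ
  | .or φ ψ => freev φ ∪ freev ψ
  | .ex s W x φ => if x ∈ freev φ then (freev φ \ {x}) ∪ denot s W else freev φ
  | .all s W x φ => if x ∈ freev φ then (freev φ \ {x}) ∪ denot s W else freev φ

/-- Alternation flags. -/
inductive Flag : Type
  | EA : Flag
  | AE : Flag

/-- The dual alternation flag. -/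
def Flag.dual : Flag → Flag
  | .EA => .AE
  | .AE => .EA

/-- Satisfaction of an atom by a (partial) assignment. -/
def atomSat (𝔄 : Struct RSym ar) (R : RSym) (xs : Fin (ar R) → Var)
    (α : Asg Var 𝔄.A) : Prop :=
  ∃ v : Fin (ar R) → 𝔄.A, (∀ i, α (xs i) = some (v i)) ∧ 𝔄.interp R v

/-- Hodges' alternating satisfaction relation `𝔄, 𝕏 ⊨^fl φ` for ADIF. -/
noncomputable def sat (𝔄 : Struct RSym ar) :
    Formula Var RSym ar → Flag → Hyperteam Var 𝔄.A → Prop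
  | .fls, .EA, 𝕏 => ∅ ∈ 𝕏
  | .fls, .AE, 𝕏 => 𝕏 = ∅
  | .tru, .EA, 𝕏 => 𝕏 ≠ ∅
  | .tru, .AE, 𝕏 => ∅ ∉ 𝕏
  | .atom R xs, .EA, 𝕏 => ∃ X ∈ 𝕏, ∀ α ∈ X, atomSat 𝔄 R xs α
  | .atom R xs, .AE, 𝕏 => ∀ X ∈ 𝕏, ∃ α ∈ X, atomSat 𝔄 R xs α
  | .not φ, fl, 𝕏 => ¬ sat 𝔄 φ fl.dual 𝕏
  | .and φ ψ, .EA, 𝕏 =>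
      ∀ 𝕏₁ 𝕏₂, Bipartition 𝕏₁ 𝕏₂ 𝕏 → sat 𝔄 φ .EA 𝕏₁ ∨ sat 𝔄 ψ .EA 𝕏₂
  | .and φ ψ, .AE, 𝕏 =>
      ∀ 𝕏₁ 𝕏₂, Bipartition 𝕏₁ 𝕏₂ (dualH 𝕏) → sat 𝔄 φ .EA 𝕏₁ ∨ sat 𝔄 ψ .EA 𝕏₂
  | .or φ ψ, .AE, 𝕏 =>
      ∃ 𝕏₁ 𝕏₂, Bipartition 𝕏₁ 𝕏₂ 𝕏 ∧ sat 𝔄 φ .AE 𝕏₁ ∧ sat 𝔄 ψ .AE 𝕏₂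
  | .or φ ψ, .EA, 𝕏 =>
      ∃ 𝕏₁ 𝕏₂, Bipartition 𝕏₁ 𝕏₂ (dualH 𝕏) ∧ sat 𝔄 φ .AE 𝕏₁ ∧ sat 𝔄 ψ .AE 𝕏₂
  | .ex s W x φ, .EA, 𝕏 => sat 𝔄 φ .EA (extH (denot s W) 𝕏 x)
  | .ex s W x φ, .AE, 𝕏 => sat 𝔄 φ .EA (extH (denot s W) (dualH 𝕏) x)
  | .all s W x φ, .AE, 𝕏 => sat 𝔄 φ .AE (extH (denot s W) 𝕏 x)
  | .all s W x φ, .EA, 𝕏 => sat 𝔄 φ .AE (extH (denot s W) (dualH 𝕏) x)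

/-- `φ` is `fl`-satisfiable on `𝔄`: some proper hyperteam over `sup φ` satisfies it. -/
noncomputable def SatOn (𝔄 : Struct RSym ar) (fl : Flag) (φ : Formula Var RSym ar) : Prop :=
  ∃ 𝕏 : Hyperteam Var 𝔄.A, HyperteamOn 𝕏 (supv φ) ∧ Proper 𝕏 ∧ sat 𝔄 φ fl 𝕏

/-- `φ` is `fl`-satisfiable: `fl`-satisfiable on some structure. -/
noncomputable def Satisfiable (Var : Type) {RSym : Type} {ar : RSym → ℕ}
    (fl : Flag) (φ : Formula Var RSym ar) : Prop :=
  ∃ 𝔄 : Struct RSym ar, SatOn 𝔄 fl φ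

/-- `φ ⇛^fl ψ`: `fl`-implication between ADIF formulas. -/
noncomputable def ImpliesF (fl : Flag) (φ ψ : Formula Var RSym ar) : Prop :=
  ∀ 𝔄 : Struct RSym ar, ∀ 𝕏 : Hyperteam Var 𝔄.A,
    OverSup 𝕏 (supv φ ∪ supv ψ) → sat 𝔄 φ fl 𝕏 → sat 𝔄 ψ fl 𝕏

/-- `φ ≅^fl ψ`: `fl`-equivalence between ADIF formulas. -/
noncomputable def EquivFlagF (fl : Flag) (φ ψ : Formula Var RSym ar) : Prop :=
  ImpliesF fl φ ψ ∧ ImpliesF fl ψ φ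

/-- `φ ≅ ψ`: equivalence for both alternation flags. -/
noncomputable def EquivF (φ ψ : Formula Var RSym ar) : Prop :=
  ∀ fl : Flag, EquivFlagF fl φ ψ

end ADIF

namespace ADIF

variable {Var RSym : Type} {ar : RSym → ℕ} {A : Type}

/-- A formula is atomic if it is `⊥`, `⊤` or a relational atom. -/
def IsAtomic : Formula Var RSym ar → Prop
  | .fls => True
  | .tru => True
  | .atom _ _ => True
  | _ => False

/-- Negation normal form: negation is applied only to atomic formulas. -/
def IsNNF : Formula Var RSym ar → Prop
  | .fls => True
  | .tru => True
  | .atom _ _ => True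
  | .not φ => IsAtomic φ
  | .and φ ψ => IsNNF φ ∧ IsNNF ψ
  | .or φ ψ => IsNNF φ ∧ IsNNF ψ
  | .ex _ _ _ φ => IsNNF φ
  | .all _ _ _ φ => IsNNF φ

/-- An item `Q^{±W}x` of a quantifier prefix: `q = true` means `∃`,
`q = false` means `∀`; `s = true` means `+W`, `s = false` means `−W`. -/
structure QItem (Var : Type) where
  q : Bool
  s : Bool
  W : Finset Var
  x : Var

/-- The constraint set of a quantifier-prefix item. -/
def QItem.constr (i : QItem Var) : Set Var := denot i.s i.W

/-- Well-formed quantifier prefixes: each variable is quantified at most once,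
does not occur in its own constraint set, and is not quantified in the scope of
a quantifier whose constraint set contains it. -/
def GoodPrefix : List (QItem Var) → Prop
  | [] => True
  | i :: rest =>
      i.x ∉ i.constr ∧ (∀ j ∈ rest, j.x ≠ i.x ∧ j.x ∉ i.constr) ∧ GoodPrefix rest

/-- Prefixing a formula by a quantifier prefix. -/
def applyPrefix : List (QItem Var) → Formula Var RSym ar → Formula Var RSym ar
  | [], φ => φ
  | i :: rest, φ =>
      if i.q then Formula.ex i.s i.W i.x (applyPrefix rest φ)
      else Formula.all i.s i.W i.x (applyPrefix rest φ)

/-- The extension operator `ext^fl(𝕏, Q^{±W}x)` for a single quantifier. -/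
noncomputable def extQ (fl : Flag) (𝕏 : Hyperteam Var A) (i : QItem Var) : Hyperteam Var A :=
  match fl, i.q with
  | .EA, true => extH (denot i.s i.W) 𝕏 i.x
  | .AE, false => extH (denot i.s i.W) 𝕏 i.x
  | .EA, false => dualH (extH (denot i.s i.W) (dualH 𝕏) i.x)
  | .AE, true => dualH (extH (denot i.s i.W) (dualH 𝕏) i.x)

/-- The extension operator `ext^fl(𝕏, ℘)` for a quantifier prefix. -/
noncomputable def extP (fl : Flag) : Hyperteam Var A → List (QItem Var) → Hyperteam Var A
  | 𝕏, [] => 𝕏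
  | 𝕏, i :: rest => extP fl (extQ fl 𝕏 i) rest

/-- Ordinary first-order formulas over the signature. -/
inductive FForm (Var RSym : Type) (ar : RSym → ℕ) : Type
  | fls : FForm Var RSym ar
  | tru : FForm Var RSym ar
  | atom (R : RSym) (xs : Fin (ar R) → Var) : FForm Var RSym ar
  | not (φ : FForm Var RSym ar) : FForm Var RSym ar
  | and (φ ψ : FForm Var RSym ar) : FForm Var RSym ar
  | or (φ ψ : FForm Var RSym ar) : FForm Var RSym ar
  | ex (x : Var) (φ : FForm Var RSym ar) : FForm Var RSym ar
  | all (x : Var) (φ : FForm Var RSym ar) : FForm Var RSym ar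

/-- Free variables of a first-order formula. -/
def folFree : FForm Var RSym ar → Set Var
  | .fls => ∅
  | .tru => ∅
  | .atom _ xs => Set.range xs
  | .not φ => folFree φ
  | .and φ ψ => folFree φ ∪ folFree ψ
  | .or φ ψ => folFree φ ∪ folFree ψ
  | .ex x φ => folFree φ \ {x}
  | .all x φ => folFree φ \ {x}

/-- Standard Tarskian satisfaction `𝔄, α ⊨_FOL φ` for first-order formulas. -/
noncomputable def folSat (𝔄 : Struct RSym ar) : FForm Var RSym ar → Asg Var 𝔄.A → Prop
  | .fls, _ => False
  | .tru, _ => True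
  | .atom R xs, α => atomSat 𝔄 R xs α
  | .not φ, α => ¬ folSat 𝔄 φ α
  | .and φ ψ, α => folSat 𝔄 φ α ∧ folSat 𝔄 ψ α
  | .or φ ψ, α => folSat 𝔄 φ α ∨ folSat 𝔄 ψ α
  | .ex x φ, α => ∃ a : 𝔄.A, folSat 𝔄 φ (updateA α x a)
  | .all x φ, α => ∀ a : 𝔄.A, folSat 𝔄 φ (updateA α x a)

/-- The FOL fragment of ADIF: every quantifier is `Q^{+W}x` with
`W = sup(φ) ∖ {x}`. -/
def IsFOLFrag : Formula Var RSym ar → Prop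
  | .fls => True
  | .tru => True
  | .atom _ _ => True
  | .not φ => IsFOLFrag φ
  | .and φ ψ => IsFOLFrag φ ∧ IsFOLFrag ψ
  | .or φ ψ => IsFOLFrag φ ∧ IsFOLFrag ψ
  | .ex s W x φ => s = true ∧ (↑W : Set Var) = supv φ \ {x} ∧ IsFOLFrag φ
  | .all s W x φ => s = true ∧ (↑W : Set Var) = supv φ \ {x} ∧ IsFOLFrag φ

/-- Tarskian satisfaction of an ADIF formula (in the FOL fragment) by an
assignment, quantifier decorations being ignored. -/
noncomputable def tarskiSat (𝔄 : Struct RSym ar) : Formula Var RSym ar → Asg Var 𝔄.A → Prop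
  | .fls, _ => False
  | .tru, _ => True
  | .atom R xs, α => atomSat 𝔄 R xs α
  | .not φ, α => ¬ tarskiSat 𝔄 φ α
  | .and φ ψ, α => tarskiSat 𝔄 φ α ∧ tarskiSat 𝔄 ψ α
  | .or φ ψ, α => tarskiSat 𝔄 φ α ∨ tarskiSat 𝔄 ψ α
  | .ex _ _ x φ, α => ∃ a : 𝔄.A, tarskiSat 𝔄 φ (updateA α x a)
  | .all _ _ x φ, α => ∀ a : 𝔄.A, tarskiSat 𝔄 φ (updateA α x a)

end ADIF


namespace ADIF

variable {Var RSym : Type} {ar : RSym → ℕ} {A : Type}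

lemma empty_mem_dualH_iff {𝕏 : Hyperteam Var A} : ∅ ∈ dualH 𝕏 ↔ 𝕏 = ∅ := by
  constructor
  · rintro ⟨χ, hχ, h⟩
    ext X; simp only [Set.mem_empty_iff_false, iff_false]
    intro hX
    have h1 : χ X ∈ χ '' 𝕏 := Set.mem_image_of_mem χ hX
    rw [← h] at h1
    exact Set.notMem_empty _ h1
  · rintro rfl
    exact ⟨fun _ => emptyAsg Var A, fun X hX => absurd hX (Set.notMem_empty X),
      (Set.image_empty _).symm⟩

lemma dualH_eq_empty_iff {𝕏 : Hyperteam Var A} : dualH 𝕏 = ∅ ↔ ∅ ∈ 𝕏 := by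
  constructor
  · intro h; by_contra hne
    have hmem : (fun X : Team Var A =>
        if hX : X.Nonempty then hX.choose else emptyAsg Var A) '' 𝕏 ∈ dualH 𝕏 := by
      refine ⟨_, ?_, rfl⟩
      intro X hX
      have hXne : X.Nonempty := Set.nonempty_iff_ne_empty.2 fun he => hne (he ▸ hX)
      simpa only [dif_pos hXne] using hXne.choose_spec
    rw [h] at hmem
    exact Set.notMem_empty _ hmem
  · intro h
    ext Y; simp only [Set.mem_empty_iff_false, iff_false]
    rintro ⟨χ, hχ, rfl⟩
    exact Set.notMem_empty _ (hχ ∅ h)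

lemma dualH_antitone {𝕏 𝕐 : Hyperteam Var A} (h : incl 𝕏 𝕐) :
    incl (dualH 𝕐) (dualH 𝕏) := by
  rintro Z ⟨χ, hχ, rfl⟩
  refine ⟨(fun X => if h' : ∃ Y ∈ 𝕐, Y ⊆ X then χ h'.choose else emptyAsg Var A) '' 𝕏,
    ⟨_, ?_, rfl⟩, ?_⟩
  · intro X hX
    have h' : ∃ Y ∈ 𝕐, Y ⊆ X := h X hX
    simp only [dif_pos h']
    exact h'.choose_spec.2 (hχ _ h'.choose_spec.1)
  · rintro β ⟨X, hX, rfl⟩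
    have h' : ∃ Y ∈ 𝕐, Y ⊆ X := h X hX
    simp only [dif_pos h']
    exact Set.mem_image_of_mem χ h'.choose_spec.1

lemma extH_mono {𝕏 𝕐 : Hyperteam Var A} {W : Set Var} {x : Var} (h : incl 𝕏 𝕐) :
    incl (extH W 𝕏 x) (extH W 𝕐 x) := by
  rintro Z ⟨X, hX, F, hF, rfl⟩
  obtain ⟨Y, hY, hsub⟩ := h X hX
  exact ⟨extT Y F x, ⟨Y, hY, F, hF, rfl⟩, Set.image_mono hsub⟩

lemma extH_equiv {𝕏 𝕐 : Hyperteam Var A} {W : Set Var} {x : Var} (h : equivH 𝕏 𝕐) :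
    equivH (extH W 𝕏 x) (extH W 𝕐 x) :=
  ⟨extH_mono h.1, extH_mono h.2⟩

lemma incl_dual_dual (𝕏 : Hyperteam Var A) : incl 𝕏 (dualH (dualH 𝕏)) := by
  intro X hX
  refine ⟨(fun Y => if h : (Y ∩ X).Nonempty then h.choose else emptyAsg Var A) '' dualH 𝕏,
    ⟨_, ?_, rfl⟩, ?_⟩
  · rintro Y ⟨χ, hχ, rfl⟩
    have h : ((χ '' 𝕏) ∩ X).Nonempty := ⟨χ X, Set.mem_image_of_mem χ hX, hχ X hX⟩
    simp only [dif_pos h]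
    exact h.choose_spec.1
  · rintro β ⟨Y, hY, rfl⟩
    obtain ⟨χ, hχ, rfl⟩ := hY
    have h : ((χ '' 𝕏) ∩ X).Nonempty := ⟨χ X, Set.mem_image_of_mem χ hX, hχ X hX⟩
    simp only [dif_pos h]
    exact h.choose_spec.2

lemma dual_dual_incl (𝕏 : Hyperteam Var A) : incl (dualH (dualH 𝕏)) 𝕏 := by
  rintro Z ⟨ξ, hξ, rfl⟩
  by_contra hcon
  push_neg at hcon
  set χ : Team Var A → Asg Var A :=
    fun X => if h : ∃ β ∈ X, β ∉ ξ '' dualH 𝕏 then h.choose else emptyAsg Var A with hχdef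
  have hch : ∀ X ∈ 𝕏, χ X ∈ X ∧ χ X ∉ ξ '' dualH 𝕏 := by
    intro X hX
    have h : ∃ β ∈ X, β ∉ ξ '' dualH 𝕏 := Set.not_subset.1 (hcon X hX)
    simp only [hχdef, dif_pos h]
    exact h.choose_spec
  have hY : χ '' 𝕏 ∈ dualH 𝕏 := ⟨χ, fun X hX => (hch X hX).1, rfl⟩
  have h1 : ξ (χ '' 𝕏) ∈ χ '' 𝕏 := hξ _ hY
  have h2 : ξ (χ '' 𝕏) ∈ ξ '' dualH 𝕏 := Set.mem_image_of_mem ξ hY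
  obtain ⟨X, hX, heq⟩ := h1
  rw [← heq] at h2
  exact (hch X hX).2 h2

lemma equiv_dual_dual (𝕏 : Hyperteam Var A) : equivH 𝕏 (dualH (dualH 𝕏)) :=
  ⟨incl_dual_dual 𝕏, dual_dual_incl 𝕏⟩

lemma exists_forall_dual (𝕏 : Hyperteam Var A) (P : Asg Var A → Prop) :
    (∃ X ∈ 𝕏, ∀ α ∈ X, P α) ↔ (∀ Y ∈ dualH 𝕏, ∃ α ∈ Y, P α) := by
  constructor
  · rintro ⟨X, hX, hall⟩ Y ⟨χ, hχ, rfl⟩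
    exact ⟨χ X, Set.mem_image_of_mem χ hX, hall _ (hχ X hX)⟩
  · intro hall
    by_contra hcon
    push_neg at hcon
    set χ : Team Var A → Asg Var A :=
      fun X => if h : ∃ α ∈ X, ¬ P α then h.choose else emptyAsg Var A with hχdef
    have hch : ∀ X ∈ 𝕏, χ X ∈ X ∧ ¬ P (χ X) := by
      intro X hX
      have h : ∃ α ∈ X, ¬ P α := hcon X hX
      simp only [hχdef, dif_pos h]
      exact h.choose_spec
    obtain ⟨α, hα, hP⟩ := hall (χ '' 𝕏) ⟨χ, fun X hX => (hch X hX).1, rfl⟩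
    obtain ⟨X, hX, rfl⟩ := hα
    exact (hch X hX).2 hP

lemma forall_exists_dual (𝕏 : Hyperteam Var A) (P : Asg Var A → Prop) :
    (∀ X ∈ 𝕏, ∃ α ∈ X, P α) ↔ (∃ Y ∈ dualH 𝕏, ∀ α ∈ Y, P α) := by
  constructor
  · intro hall
    set χ : Team Var A → Asg Var A :=
      fun X => if h : ∃ α ∈ X, P α then h.choose else emptyAsg Var A with hχdef
    have hch : ∀ X ∈ 𝕏, χ X ∈ X ∧ P (χ X) := by
      intro X hX
      have h : ∃ α ∈ X, P α := hall X hX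
      simp only [hχdef, dif_pos h]
      exact h.choose_spec
    refine ⟨χ '' 𝕏, ⟨χ, fun X hX => (hch X hX).1, rfl⟩, ?_⟩
    rintro α ⟨X, hX, rfl⟩
    exact (hch X hX).2
  · rintro ⟨Y, ⟨χ, hχ, rfl⟩, hall⟩ X hX
    exact ⟨χ X, hχ X hX, hall _ (Set.mem_image_of_mem χ hX)⟩

lemma split_bip {𝔸 𝔹 𝔹₁ 𝔹₂ : Hyperteam Var A} (h : incl 𝔸 𝔹)
    (hb : Bipartition 𝔹₁ 𝔹₂ 𝔹) :
    ∃ 𝔸₁ 𝔸₂, Bipartition 𝔸₁ 𝔸₂ 𝔸 ∧ incl 𝔸₁ 𝔹₁ ∧ incl 𝔸₂ 𝔹₂ := by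
  set g : Team Var A → Team Var A :=
    fun X => if h' : ∃ Y ∈ 𝔹, Y ⊆ X then h'.choose else X with hgdef
  have hg : ∀ X ∈ 𝔸, g X ∈ 𝔹 ∧ g X ⊆ X := by
    intro X hX
    have h' : ∃ Y ∈ 𝔹, Y ⊆ X := h X hX
    simp only [hgdef, dif_pos h']
    exact h'.choose_spec
  refine ⟨{X ∈ 𝔸 | g X ∈ 𝔹₁}, {X ∈ 𝔸 | g X ∉ 𝔹₁}, ⟨?_, ?_⟩, ?_, ?_⟩
  · ext X
    simp only [Set.mem_inter_iff, Set.mem_setOf_eq, Set.mem_empty_iff_false, iff_false]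
    tauto
  · ext X
    simp only [Set.mem_union, Set.mem_setOf_eq]
    tauto
  · rintro X ⟨hX, hX1⟩
    exact ⟨g X, hX1, (hg X hX).2⟩
  · rintro X ⟨hX, hX1⟩
    have hmem : g X ∈ 𝔹₁ ∪ 𝔹₂ := hb.2 ▸ (hg X hX).1
    rcases hmem with hm | hm
    · exact absurd hm hX1
    · exact ⟨g X, hm, (hg X hX).2⟩

theorem sat_mono (𝔄 : Struct RSym ar) (φ : Formula Var RSym ar) :
    ∀ 𝕏 𝕐 : Hyperteam Var 𝔄.A, incl 𝕏 𝕐 →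
      (sat 𝔄 φ .EA 𝕏 → sat 𝔄 φ .EA 𝕐) ∧ (sat 𝔄 φ .AE 𝕐 → sat 𝔄 φ .AE 𝕏) := by
  induction φ with
  | fls =>
    intro 𝕏 𝕐 h
    constructor
    · intro hx
      have hx' : ∅ ∈ 𝕏 := hx
      obtain ⟨Y, hY, hsub⟩ := h ∅ hx'
      have hYe : Y = ∅ := Set.subset_empty_iff.1 hsub
      show ∅ ∈ 𝕐
      exact hYe ▸ hY
    · intro hy
      have hy' : 𝕐 = ∅ := hy
      show 𝕏 = ∅
      apply Set.eq_empty_iff_forall_notMem.2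
      intro X hX
      obtain ⟨Y, hY, _⟩ := h X hX
      rw [hy'] at hY
      exact Set.notMem_empty _ hY
  | tru =>
    intro 𝕏 𝕐 h
    constructor
    · intro hx
      have hx' : 𝕏 ≠ ∅ := hx
      show 𝕐 ≠ ∅
      obtain ⟨X, hX⟩ := Set.nonempty_iff_ne_empty.2 hx'
      obtain ⟨Y, hY, _⟩ := h X hX
      exact Set.nonempty_iff_ne_empty.1 ⟨Y, hY⟩
    · intro hy
      have hy' : ∅ ∉ 𝕐 := hy
      show ∅ ∉ 𝕏
      intro hX
      obtain ⟨Y, hY, hsub⟩ := h ∅ hX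
      exact hy' (Set.subset_empty_iff.1 hsub ▸ hY)
  | atom R xs =>
    intro 𝕏 𝕐 h
    constructor
    · rintro ⟨X, hX, hall⟩
      obtain ⟨Y, hY, hsub⟩ := h X hX
      exact ⟨Y, hY, fun α hα => hall α (hsub hα)⟩
    · intro hy X hX
      obtain ⟨Y, hY, hsub⟩ := h X hX
      obtain ⟨α, hα, hP⟩ := hy Y hY
      exact ⟨α, hsub hα, hP⟩
  | not φ ihφ =>
    intro 𝕏 𝕐 h
    constructor
    · intro hx hy
      exact hx ((ihφ 𝕏 𝕐 h).2 hy)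
    · intro hy hx
      exact hy ((ihφ 𝕏 𝕐 h).1 hx)
  | and φ ψ ihφ ihψ =>
    intro 𝕏 𝕐 h
    have key : ∀ 𝔸 𝔹 : Hyperteam Var 𝔄.A, incl 𝔸 𝔹 →
        (∀ 𝕏₁ 𝕏₂, Bipartition 𝕏₁ 𝕏₂ 𝔸 → sat 𝔄 φ .EA 𝕏₁ ∨ sat 𝔄 ψ .EA 𝕏₂) →
        (∀ 𝕐₁ 𝕐₂, Bipartition 𝕐₁ 𝕐₂ 𝔹 → sat 𝔄 φ .EA 𝕐₁ ∨ sat 𝔄 ψ .EA 𝕐₂) := by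
      intro 𝔸 𝔹 hAB H 𝕐₁ 𝕐₂ hb
      obtain ⟨𝔸₁, 𝔸₂, hbA, h1, h2⟩ := split_bip hAB hb
      rcases H 𝔸₁ 𝔸₂ hbA with hc | hc
      · exact Or.inl ((ihφ _ _ h1).1 hc)
      · exact Or.inr ((ihψ _ _ h2).1 hc)
    exact ⟨key 𝕏 𝕐 h, key (dualH 𝕐) (dualH 𝕏) (dualH_antitone h)⟩
  | or φ ψ ihφ ihψ =>
    intro 𝕏 𝕐 h
    have key : ∀ 𝔸 𝔹 : Hyperteam Var 𝔄.A, incl 𝔸 𝔹 →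
        (∃ 𝕐₁ 𝕐₂, Bipartition 𝕐₁ 𝕐₂ 𝔹 ∧ sat 𝔄 φ .AE 𝕐₁ ∧ sat 𝔄 ψ .AE 𝕐₂) →
        (∃ 𝕏₁ 𝕏₂, Bipartition 𝕏₁ 𝕏₂ 𝔸 ∧ sat 𝔄 φ .AE 𝕏₁ ∧ sat 𝔄 ψ .AE 𝕏₂) := by
      rintro 𝔸 𝔹 hAB ⟨𝕐₁, 𝕐₂, hb, hφ, hψ⟩
      obtain ⟨𝔸₁, 𝔸₂, hbA, h1, h2⟩ := split_bip hAB hb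
      exact ⟨𝔸₁, 𝔸₂, hbA, (ihφ _ _ h1).2 hφ, (ihψ _ _ h2).2 hψ⟩
    exact ⟨key (dualH 𝕐) (dualH 𝕏) (dualH_antitone h), key 𝕏 𝕐 h⟩
  | ex s W x φ ihφ =>
    intro 𝕏 𝕐 h
    constructor
    · intro hx
      exact (ihφ _ _ (extH_mono h)).1 hx
    · intro hy
      exact (ihφ _ _ (extH_mono (dualH_antitone h))).1 hy
  | all s W x φ ihφ =>
    intro 𝕏 𝕐 h
    constructor
    · intro hx
      exact (ihφ _ _ (extH_mono (dualH_antitone h))).2 hx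
    · intro hy
      exact (ihφ _ _ (extH_mono h)).2 hy

lemma sat_equiv (𝔄 : Struct RSym ar) (φ : Formula Var RSym ar) (fl : Flag)
    {𝕏 𝕐 : Hyperteam Var 𝔄.A} (h : equivH 𝕏 𝕐) :
    sat 𝔄 φ fl 𝕏 ↔ sat 𝔄 φ fl 𝕐 := by
  cases fl with
  | EA => exact ⟨(sat_mono 𝔄 φ 𝕏 𝕐 h.1).1, (sat_mono 𝔄 φ 𝕐 𝕏 h.2).1⟩
  | AE => exact ⟨(sat_mono 𝔄 φ 𝕐 𝕏 h.2).2, (sat_mono 𝔄 φ 𝕏 𝕐 h.1).2⟩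

theorem sat_dual (𝔄 : Struct RSym ar) (φ : Formula Var RSym ar) :
    ∀ (fl : Flag) (𝕏 : Hyperteam Var 𝔄.A),
      sat 𝔄 φ fl 𝕏 ↔ sat 𝔄 φ fl.dual (dualH 𝕏) := by
  induction φ with
  | fls =>
    intro fl 𝕏
    cases fl with
    | EA => exact dualH_eq_empty_iff.symm
    | AE => exact empty_mem_dualH_iff.symm
  | tru =>
    intro fl 𝕏
    cases fl with
    | EA => exact (not_congr empty_mem_dualH_iff).symm
    | AE => exact (not_congr dualH_eq_empty_iff).symm
  | atom R xs =>
    intro fl 𝕏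
    cases fl with
    | EA => exact exists_forall_dual 𝕏 (atomSat 𝔄 R xs)
    | AE => exact forall_exists_dual 𝕏 (atomSat 𝔄 R xs)
  | not φ ihφ =>
    intro fl 𝕏
    cases fl with
    | EA => exact not_congr (ihφ .AE 𝕏)
    | AE => exact not_congr (ihφ .EA 𝕏)
  | and φ ψ ihφ ihψ =>
    intro fl 𝕏
    cases fl with
    | EA => exact sat_equiv 𝔄 (.and φ ψ) .EA (equiv_dual_dual 𝕏)
    | AE => exact Iff.rfl
  | or φ ψ ihφ ihψ =>
    intro fl 𝕏
    cases fl with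
    | EA => exact Iff.rfl
    | AE => exact sat_equiv 𝔄 (.or φ ψ) .AE (equiv_dual_dual 𝕏)
  | ex s W x φ ihφ =>
    intro fl 𝕏
    cases fl with
    | EA => exact sat_equiv 𝔄 φ .EA (extH_equiv (equiv_dual_dual 𝕏))
    | AE => exact Iff.rfl
  | all s W x φ ihφ =>
    intro fl 𝕏
    cases fl with
    | EA => exact Iff.rfl
    | AE => exact sat_equiv 𝔄 φ .AE (extH_equiv (equiv_dual_dual 𝕏))

theorem prefix_ext_aux {Var RSym : Type} {ar : RSym → ℕ} (𝔄 : Struct RSym ar)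
    (φ : Formula Var RSym ar) :
    ∀ (℘ : List (QItem Var)) (fl : Flag) (𝕏 : Hyperteam Var 𝔄.A),
      sat 𝔄 (applyPrefix ℘ φ) fl 𝕏 ↔ sat 𝔄 φ fl (extP fl 𝕏 ℘) := by
  intro ℘
  induction ℘ with
  | nil => intro fl 𝕏; exact Iff.rfl
  | cons i rest ih =>
    obtain ⟨q, s, W, x⟩ := i
    intro fl 𝕏
    cases q with
    | true =>
      cases fl with
      | EA => exact ih .EA (extH (denot s W) 𝕏 x)
      | AE =>
        exact (sat_dual 𝔄 (applyPrefix rest φ) .EA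
          (extH (denot s W) (dualH 𝕏) x)).trans
          (ih .AE (dualH (extH (denot s W) (dualH 𝕏) x)))
    | false =>
      cases fl with
      | AE => exact ih .AE (extH (denot s W) 𝕏 x)
      | EA =>
        exact (sat_dual 𝔄 (applyPrefix rest φ) .AE
          (extH (denot s W) (dualH 𝕏) x)).trans
          (ih .EA (dualH (extH (denot s W) (dualH 𝕏) x)))

end ADIF

namespace ADIF

/-- Prefix Extension. -/
theorem prefix_extension {Var RSym : Type} {ar : RSym → ℕ}
    (𝔄 : Struct RSym ar) (℘ : List (QItem Var)) (h℘ : GoodPrefix ℘)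
    (φ : Formula Var RSym ar) (fl : Flag) (𝕏 : Hyperteam Var 𝔄.A)
    (h𝕏 : OverSup 𝕏 (supv (applyPrefix ℘ φ))) :
    sat 𝔄 (applyPrefix ℘ φ) fl 𝕏 ↔ sat 𝔄 φ fl (extP fl 𝕏 ℘) :=
  prefix_ext_aux 𝔄 φ ℘ fl 𝕏

end ADIF
end

section
/- (FOL Dualisation) For every first-order formula φ and every hyperteam 𝕏 over a superset of free(φ): (1) there exists a team X ∈ 𝕏 such that 𝔄, α ⊨_FOL φ for all assignments α ∈ X, iff for every team X ∈ 𝕏~ there exists an assignment α ∈ X with 𝔄, α ⊨_FOL φ; (2) for every team X ∈ 𝕏 there exists an assignment α ∈ X with 𝔄, α ⊨_FOL φ, iff there exists a team X ∈ 𝕏~ such that 𝔄, α ⊨_FOL φ for all assignments α ∈ X. -/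
open scoped Classical

/-! A team of `dualH 𝕏` all of whose assignments satisfy a property `P` is the same as a
choice of a `P`-witness in every team of `𝕏`. Part (1) is then part (2) for `¬ P`, with both
sides negated. -/

namespace ADIF

variable {Var A : Type}

theorem forall_exists_iff_exists_mem_dualH_forall (𝕏 : Hyperteam Var A)
    (P : Asg Var A → Prop) :
    (∀ X ∈ 𝕏, ∃ α ∈ X, P α) ↔ ∃ Y ∈ dualH 𝕏, ∀ α ∈ Y, P α := by
  constructor
  · intro h
    have hchoice : ∀ X : Team Var A, ∃ α : Asg Var A, X ∈ 𝕏 → α ∈ X ∧ P α := by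
      intro X
      by_cases hX : X ∈ 𝕏
      · obtain ⟨α, hαX, hPα⟩ := h X hX
        exact ⟨α, fun _ => ⟨hαX, hPα⟩⟩
      · exact ⟨default, fun hX' => absurd hX' hX⟩
    choose χ hχ using hchoice
    refine ⟨χ '' 𝕏, ⟨χ, fun X hX => (hχ X hX).1, rfl⟩, ?_⟩
    rintro _ ⟨X, hX, rfl⟩
    exact (hχ X hX).2
  · rintro ⟨_, ⟨χ, hχ, rfl⟩, hY⟩ X hX
    exact ⟨χ X, hχ X hX, hY _ ⟨X, hX, rfl⟩⟩

theorem exists_forall_iff_forall_mem_dualH_exists (𝕏 : Hyperteam Var A)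
    (P : Asg Var A → Prop) :
    (∃ X ∈ 𝕏, ∀ α ∈ X, P α) ↔ ∀ Y ∈ dualH 𝕏, ∃ α ∈ Y, P α := by
  simpa only [not_exists, not_forall, not_and, not_not, exists_prop] using
    not_congr (forall_exists_iff_exists_mem_dualH_forall 𝕏 fun α => ¬ P α)

theorem fol_dualisation_general {Var RSym : Type} {ar : RSym → ℕ}
    (𝔄 : Struct RSym ar) (φ : FForm Var RSym ar)
    (𝕏 : Hyperteam Var 𝔄.A) :
    ((∃ X ∈ 𝕏, ∀ α ∈ X, folSat 𝔄 φ α) ↔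
      (∀ X ∈ dualH 𝕏, ∃ α ∈ X, folSat 𝔄 φ α)) ∧
    ((∀ X ∈ 𝕏, ∃ α ∈ X, folSat 𝔄 φ α) ↔
      (∃ X ∈ dualH 𝕏, ∀ α ∈ X, folSat 𝔄 φ α)) :=
  ⟨exists_forall_iff_forall_mem_dualH_exists 𝕏 _,
    forall_exists_iff_exists_mem_dualH_forall 𝕏 _⟩

/-- FOL Dualisation. -/
theorem fol_dualisation {Var RSym : Type} {ar : RSym → ℕ}
    (𝔄 : Struct RSym ar) (φ : FForm Var RSym ar)
    (𝕏 : Hyperteam Var 𝔄.A) (h𝕏 : OverSup 𝕏 (folFree φ)) :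
    ((∃ X ∈ 𝕏, ∀ α ∈ X, folSat 𝔄 φ α) ↔
      (∀ X ∈ dualH 𝕏, ∃ α ∈ X, folSat 𝔄 φ α)) ∧
    ((∀ X ∈ 𝕏, ∃ α ∈ X, folSat 𝔄 φ α) ↔
      (∃ X ∈ dualH 𝕏, ∀ α ∈ X, folSat 𝔄 φ α)) :=
  fol_dualisation_general 𝔄 φ 𝕏

end ADIF
end

section
/- (FOL Quantifiers) Let φ be a first-order formula, x a variable, V := free(φ)∖{x}, and 𝕏 a hyperteam over a superset of V. Then: (1) there exists a team X ∈ 𝕏 such that 𝔄, α ⊨_FOL ∃x.φ for all α ∈ X, iff there exists a team X ∈ ext_V(𝕏, x) such that 𝔄, α ⊨_FOL φ for all α ∈ X; (2) for every team X ∈ 𝕏 there exists α ∈ X with 𝔄, α ⊨_FOL ∀x.φ, iff for every team X ∈ ext_V(𝕏, x) there exists α ∈ X with 𝔄, α ⊨_FOL φ. -/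
open scoped Classical

/-!
Both parts reduce to Skolemisation. Whether `φ` holds at `α[x ↦ a]` depends only on `a` and
the restriction of `α` to `V = free(φ) ∖ {x}`, so a witness for `x` can be chosen as a function
of `α↾V`, i.e. by a `V`-uniform function. Part (1) chooses witnesses of `φ`; part (2) is the
negation of part (1) for `¬φ`, whose witnesses are counterexamples to `∀x.φ`.
-/

namespace ADIF

section Skolem

variable {Var A : Type}

lemma restrictA_restrictA (α : Asg Var A) (W : Set Var) :
    restrictA (restrictA α W) W = restrictA α W := by
  funext v
  by_cases h : v ∈ W <;> simp [restrictA, h]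

lemma exists_skolem_mem_FW [Nonempty A] (W : Set Var) (Q : Asg Var A → A → Prop)
    (hQ : ∀ α a, Q α a ↔ Q (restrictA α W) a) :
    ∃ F ∈ FW W, ∀ α, (∃ a, Q α a) → Q α (F α) := by
  refine ⟨fun α => Classical.epsilon (Q (restrictA α W)), fun α => ?_, fun α hα => ?_⟩
  · simp only [restrictA_restrictA]
  · simp only [hQ α] at hα ⊢
    exact Classical.epsilon_spec hα

variable [Nonempty A] (W : Set Var) (𝕏 : Hyperteam Var A) (x : Var) (P : Asg Var A → Prop)

lemma exists_forall_exists_iff_extH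
    (hP : ∀ α a, P (updateA α x a) ↔ P (updateA (restrictA α W) x a)) :
    (∃ X ∈ 𝕏, ∀ α ∈ X, ∃ a, P (updateA α x a)) ↔ ∃ Y ∈ extH W 𝕏 x, ∀ β ∈ Y, P β := by
  constructor
  · rintro ⟨X, hX, hXP⟩
    obtain ⟨F, hF, hFP⟩ := exists_skolem_mem_FW W (fun α a => P (updateA α x a)) hP
    refine ⟨extT X F x, ⟨X, hX, F, hF, rfl⟩, ?_⟩
    rintro _ ⟨α, hα, rfl⟩
    exact hFP α (hXP α hα)
  · rintro ⟨_, ⟨X, hX, F, -, rfl⟩, hYP⟩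
    exact ⟨X, hX, fun α hα => ⟨F α, hYP _ ⟨α, hα, rfl⟩⟩⟩

lemma forall_exists_forall_iff_extH
    (hP : ∀ α a, P (updateA α x a) ↔ P (updateA (restrictA α W) x a)) :
    (∀ X ∈ 𝕏, ∃ α ∈ X, ∀ a, P (updateA α x a)) ↔ ∀ Y ∈ extH W 𝕏 x, ∃ β ∈ Y, P β := by
  have hnP := exists_forall_exists_iff_extH W 𝕏 x (fun β => ¬ P β) fun α a => not_congr (hP α a)
  simpa only [not_forall, not_exists, not_and, not_not, exists_prop] using not_congr hnP

end Skolem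

lemma folSat_congr {Var RSym : Type} {ar : RSym → ℕ} {𝔄 : Struct RSym ar}
    (φ : FForm Var RSym ar) {α β : Asg Var 𝔄.A} (h : Set.EqOn α β (folFree φ)) :
    folSat 𝔄 φ α ↔ folSat 𝔄 φ β := by
  induction φ generalizing α β with
  | fls | tru => rfl
  | atom R xs =>
    have hxs : ∀ i, α (xs i) = β (xs i) := fun i => h ⟨i, rfl⟩
    simp only [folSat, atomSat, hxs]
  | not φ ih => exact not_congr (ih h)
  | and φ ψ ihφ ihψ =>
    exact and_congr (ihφ (h.mono Set.subset_union_left)) (ihψ (h.mono Set.subset_union_right))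
  | or φ ψ ihφ ihψ =>
    exact or_congr (ihφ (h.mono Set.subset_union_left)) (ihψ (h.mono Set.subset_union_right))
  | ex y φ ih =>
    refine exists_congr fun a => ih fun v hv => ?_
    by_cases hvy : v = y
    · simp [updateA, hvy]
    · simpa [updateA, hvy] using h ⟨hv, hvy⟩
  | all y φ ih =>
    refine forall_congr' fun a => ih fun v hv => ?_
    by_cases hvy : v = y
    · simp [updateA, hvy]
    · simpa [updateA, hvy] using h ⟨hv, hvy⟩

lemma folSat_updateA_restrictA {Var RSym : Type} {ar : RSym → ℕ} {𝔄 : Struct RSym ar}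
    (φ : FForm Var RSym ar) {x : Var} {W : Set Var} (hW : folFree φ \ {x} ⊆ W)
    (α : Asg Var 𝔄.A) (a : 𝔄.A) :
    folSat 𝔄 φ (updateA α x a) ↔ folSat 𝔄 φ (updateA (restrictA α W) x a) := by
  refine folSat_congr φ fun v hv => ?_
  by_cases hvx : v = x
  · simp [updateA, hvx]
  · simp [updateA, restrictA, hvx, hW ⟨hv, hvx⟩]

theorem fol_quantifiers_general {Var RSym : Type} {ar : RSym → ℕ}
    (𝔄 : Struct RSym ar) (φ : FForm Var RSym ar) (x : Var)
    (𝕏 : Hyperteam Var 𝔄.A) :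
    ((∃ X ∈ 𝕏, ∀ α ∈ X, folSat 𝔄 (FForm.ex x φ) α) ↔
      (∃ X ∈ extH (folFree φ \ {x}) 𝕏 x, ∀ α ∈ X, folSat 𝔄 φ α)) ∧
    ((∀ X ∈ 𝕏, ∃ α ∈ X, folSat 𝔄 (FForm.all x φ) α) ↔
      (∀ X ∈ extH (folFree φ \ {x}) 𝕏 x, ∃ α ∈ X, folSat 𝔄 φ α)) := by
  have := 𝔄.nonempty
  have hφ := folSat_updateA_restrictA (𝔄 := 𝔄) φ (subset_refl (folFree φ \ {x}))
  exact ⟨exists_forall_exists_iff_extH _ 𝕏 x _ hφ, forall_exists_forall_iff_extH _ 𝕏 x _ hφ⟩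

/-- FOL Quantifiers. -/
theorem fol_quantifiers {Var RSym : Type} {ar : RSym → ℕ}
    (𝔄 : Struct RSym ar) (φ : FForm Var RSym ar) (x : Var)
    (𝕏 : Hyperteam Var 𝔄.A) (h𝕏 : OverSup 𝕏 (folFree φ \ {x})) :
    ((∃ X ∈ 𝕏, ∀ α ∈ X, folSat 𝔄 (FForm.ex x φ) α) ↔
      (∃ X ∈ extH (folFree φ \ {x}) 𝕏 x, ∀ α ∈ X, folSat 𝔄 φ α)) ∧
    ((∀ X ∈ 𝕏, ∃ α ∈ X, folSat 𝔄 (FForm.all x φ) α) ↔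
      (∀ X ∈ extH (folFree φ \ {x}) 𝕏 x, ∃ α ∈ X, folSat 𝔄 φ α)) :=
  fol_quantifiers_general 𝔄 φ x 𝕏

end ADIF
end

section
/- (FOL Boolean Connectives) Let φ₁ and φ₂ be first-order formulas, V := free(φ₁) ∪ free(φ₂), and 𝕏 a hyperteam over a superset of V. Then: (1) there exists a team X ∈ 𝕏 such that 𝔄, α ⊨_FOL φ₁ ∧ φ₂ for all α ∈ X, iff for every bipartition (𝕏₁,𝕏₂) of 𝕏 there exist an index i ∈ {1,2} and a team X ∈ 𝕏ᵢ such that 𝔄, α ⊨_FOL φᵢ for all α ∈ X; (2) for every team X ∈ 𝕏 there exists α ∈ X with 𝔄, α ⊨_FOL φ₁ ∨ φ₂, iff there exists a bipartition (𝕏₁,𝕏₂) of 𝕏 such that for every index i ∈ {1,2} and every team X ∈ 𝕏ᵢ there exists α ∈ X with 𝔄, α ⊨_FOL φᵢ. -/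
open scoped Classical

namespace ADIF

/-!
Both equivalences are pointwise: no property of first-order satisfaction is used beyond its
Boolean clauses. The nontrivial directions use the bipartition of `𝕏` according to `φ₁`: for `∧`
into the teams that contain a counterexample to `φ₁` and those that do not, for `∨` into the
teams that contain a witness of `φ₁` and those that do not.
-/

variable {Var A : Type}

lemma bipartition_sep (𝕏 : Hyperteam Var A) (P : Team Var A → Prop) :
    Bipartition {X ∈ 𝕏 | P X} {X ∈ 𝕏 | ¬ P X} 𝕏 := by
  constructor <;> ext X <;>
    simp only [Set.mem_inter_iff, Set.mem_union, Set.mem_ofPred_eq, Set.mem_empty_iff_false] <;>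
    tauto

lemma Bipartition.mem_or {𝕏₁ 𝕏₂ 𝕏 : Hyperteam Var A} (h : Bipartition 𝕏₁ 𝕏₂ 𝕏)
    {X : Team Var A} (hX : X ∈ 𝕏) : X ∈ 𝕏₁ ∨ X ∈ 𝕏₂ := by
  rwa [← h.2] at hX

lemma exists_forall_and_iff_forall_bipartition (𝕏 : Hyperteam Var A)
    (P Q : Asg Var A → Prop) :
    (∃ X ∈ 𝕏, ∀ α ∈ X, P α ∧ Q α) ↔
      ∀ 𝕏₁ 𝕏₂, Bipartition 𝕏₁ 𝕏₂ 𝕏 →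
        (∃ X ∈ 𝕏₁, ∀ α ∈ X, P α) ∨ (∃ X ∈ 𝕏₂, ∀ α ∈ X, Q α) := by
  constructor
  · rintro ⟨X, hX, hPQ⟩ 𝕏₁ 𝕏₂ h
    rcases h.mem_or hX with hX₁ | hX₂
    · exact .inl ⟨X, hX₁, fun α hα => (hPQ α hα).1⟩
    · exact .inr ⟨X, hX₂, fun α hα => (hPQ α hα).2⟩
  · intro h
    rcases h _ _ (bipartition_sep 𝕏 fun X => ∃ α ∈ X, ¬ P α) with
      ⟨X, ⟨-, α, hα, hnP⟩, hP⟩ | ⟨X, ⟨hX, hnoCounter⟩, hQ⟩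
    · exact absurd (hP α hα) hnP
    · push Not at hnoCounter
      exact ⟨X, hX, fun α hα => ⟨hnoCounter α hα, hQ α hα⟩⟩

lemma forall_exists_or_iff_exists_bipartition (𝕏 : Hyperteam Var A)
    (P Q : Asg Var A → Prop) :
    (∀ X ∈ 𝕏, ∃ α ∈ X, P α ∨ Q α) ↔
      ∃ 𝕏₁ 𝕏₂, Bipartition 𝕏₁ 𝕏₂ 𝕏 ∧
        (∀ X ∈ 𝕏₁, ∃ α ∈ X, P α) ∧ (∀ X ∈ 𝕏₂, ∃ α ∈ X, Q α) := by
  constructor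
  · intro h
    refine ⟨_, _, bipartition_sep 𝕏 fun X => ∃ α ∈ X, P α, fun X hX => hX.2,
      fun X ⟨hX, hnoWitness⟩ => ?_⟩
    obtain ⟨α, hα, hP | hQ⟩ := h X hX
    · exact absurd ⟨α, hα, hP⟩ hnoWitness
    · exact ⟨α, hα, hQ⟩
  · rintro ⟨𝕏₁, 𝕏₂, h, hP, hQ⟩ X hX
    rcases h.mem_or hX with hX₁ | hX₂
    · obtain ⟨α, hα, hPα⟩ := hP X hX₁
      exact ⟨α, hα, .inl hPα⟩
    · obtain ⟨α, hα, hQα⟩ := hQ X hX₂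
      exact ⟨α, hα, .inr hQα⟩

theorem fol_boolean_connectives_general {Var RSym : Type} {ar : RSym → ℕ}
    (𝔄 : Struct RSym ar) (φ₁ φ₂ : FForm Var RSym ar)
    (𝕏 : Hyperteam Var 𝔄.A) :
    ((∃ X ∈ 𝕏, ∀ α ∈ X, folSat 𝔄 (FForm.and φ₁ φ₂) α) ↔
      (∀ 𝕏₁ 𝕏₂, Bipartition 𝕏₁ 𝕏₂ 𝕏 →
        (∃ X ∈ 𝕏₁, ∀ α ∈ X, folSat 𝔄 φ₁ α) ∨
        (∃ X ∈ 𝕏₂, ∀ α ∈ X, folSat 𝔄 φ₂ α))) ∧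
    ((∀ X ∈ 𝕏, ∃ α ∈ X, folSat 𝔄 (FForm.or φ₁ φ₂) α) ↔
      (∃ 𝕏₁ 𝕏₂, Bipartition 𝕏₁ 𝕏₂ 𝕏 ∧
        (∀ X ∈ 𝕏₁, ∃ α ∈ X, folSat 𝔄 φ₁ α) ∧
        (∀ X ∈ 𝕏₂, ∃ α ∈ X, folSat 𝔄 φ₂ α))) :=
  ⟨exists_forall_and_iff_forall_bipartition 𝕏 (folSat 𝔄 φ₁) (folSat 𝔄 φ₂),
    forall_exists_or_iff_exists_bipartition 𝕏 (folSat 𝔄 φ₁) (folSat 𝔄 φ₂)⟩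

/-- FOL Boolean Connectives. -/
theorem fol_boolean_connectives {Var RSym : Type} {ar : RSym → ℕ}
    (𝔄 : Struct RSym ar) (φ₁ φ₂ : FForm Var RSym ar)
    (𝕏 : Hyperteam Var 𝔄.A) (h𝕏 : OverSup 𝕏 (folFree φ₁ ∪ folFree φ₂)) :
    ((∃ X ∈ 𝕏, ∀ α ∈ X, folSat 𝔄 (FForm.and φ₁ φ₂) α) ↔
      (∀ 𝕏₁ 𝕏₂, Bipartition 𝕏₁ 𝕏₂ 𝕏 →
        (∃ X ∈ 𝕏₁, ∀ α ∈ X, folSat 𝔄 φ₁ α) ∨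
        (∃ X ∈ 𝕏₂, ∀ α ∈ X, folSat 𝔄 φ₂ α))) ∧
    ((∀ X ∈ 𝕏, ∃ α ∈ X, folSat 𝔄 (FForm.or φ₁ φ₂) α) ↔
      (∃ 𝕏₁ 𝕏₂, Bipartition 𝕏₁ 𝕏₂ 𝕏 ∧
        (∀ X ∈ 𝕏₁, ∃ α ∈ X, folSat 𝔄 φ₁ α) ∧
        (∀ X ∈ 𝕏₂, ∃ α ∈ X, folSat 𝔄 φ₂ α))) :=
  fol_boolean_connectives_general 𝔄 φ₁ φ₂ 𝕏

end ADIF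
end

section
/- (Team Partitioning) Let 𝕏 be a hyperteam. Then: (1) for every bipartition (𝕏₁,𝕏₂) of the dual hyperteam 𝕏~ and all teams Y₁ ∈ 𝕏₁~ and Y₂ ∈ 𝕏₂~, there exists a team X ∈ 𝕏 with X ⊆ Y₁ ∪ Y₂; (2) for every team X ∈ 𝕏 and every pair (X₁,X₂) of disjoint subteams of X with X₁ ∪ X₂ = X, there exist a bipartition (𝕏₁,𝕏₂) of 𝕏~ and teams Y₁ ∈ 𝕏₁~ and Y₂ ∈ 𝕏₂~ such that Y₁ ⊆ X₁ and Y₂ ⊆ X₂. -/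
open scoped Classical

namespace ADIF

/-!
A team `Y ∈ 𝕏~` meets every `X ∈ 𝕏`, and conversely any set meeting every `X ∈ 𝕏` contains
some `Y ∈ 𝕏~`. Hence a set meeting every member of `𝕏~` contains some `X ∈ 𝕏`. For (1), `Y₁ ∪ Y₂`
meets every member of `𝕏₁ ∪ 𝕏₂ = 𝕏~`. For (2), split `𝕏~` into the teams that meet `X₁` and
those that do not; the latter still meet `X`, hence `X₂`, and choosing inside `X₁`, resp. `X₂`,
gives `Y₁` and `Y₂`.
-/

variable {Var A : Type}

theorem inter_nonempty_of_mem_dualH {𝕏 : Hyperteam Var A} {Y X : Team Var A}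
    (hY : Y ∈ dualH 𝕏) (hX : X ∈ 𝕏) : (X ∩ Y).Nonempty := by
  obtain ⟨χ, hχ, rfl⟩ := hY
  exact ⟨χ X, hχ X hX, Set.mem_image_of_mem χ hX⟩

theorem exists_mem_dualH_subset {𝕏 : Hyperteam Var A} {S : Team Var A}
    (hS : ∀ X ∈ 𝕏, (X ∩ S).Nonempty) : ∃ Y ∈ dualH 𝕏, Y ⊆ S := by
  choose! χ hχX hχS using hS
  exact ⟨χ '' 𝕏, ⟨χ, hχX, rfl⟩, Set.image_subset_iff.mpr hχS⟩

theorem exists_subset_of_forall_mem_dualH_inter_nonempty {𝕏 : Hyperteam Var A}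
    {S : Team Var A} (hS : ∀ Y ∈ dualH 𝕏, (Y ∩ S).Nonempty) : ∃ X ∈ 𝕏, X ⊆ S := by
  by_contra! h
  have hmeet : ∀ X ∈ 𝕏, (X ∩ Sᶜ).Nonempty := fun X hX =>
    Set.inter_compl_nonempty_iff.mpr (h X hX)
  obtain ⟨Y, hY, hYS⟩ := exists_mem_dualH_subset hmeet
  obtain ⟨α, hαY, hαS⟩ := hS Y hY
  exact hYS hαY hαS

theorem bipartition_inter_sdiff (𝕏 𝕄 : Hyperteam Var A) :
    Bipartition (𝕏 ∩ 𝕄) (𝕏 \ 𝕄) 𝕏 :=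
  ⟨Set.disjoint_iff_inter_eq_empty.mp Set.disjoint_sdiff_inter.symm,
    Set.inter_union_sdiff 𝕏 𝕄⟩

theorem exists_subset_union_of_union_eq_dualH {𝕏 𝕏₁ 𝕏₂ : Hyperteam Var A}
    (h𝕏 : 𝕏₁ ∪ 𝕏₂ = dualH 𝕏) {Y₁ Y₂ : Team Var A} (hY₁ : Y₁ ∈ dualH 𝕏₁)
    (hY₂ : Y₂ ∈ dualH 𝕏₂) : ∃ X ∈ 𝕏, X ⊆ Y₁ ∪ Y₂ := by
  refine exists_subset_of_forall_mem_dualH_inter_nonempty fun Z hZ => ?_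
  rw [← h𝕏] at hZ
  rcases hZ with hZ | hZ
  · exact (inter_nonempty_of_mem_dualH hY₁ hZ).mono
      (Set.inter_subset_inter_right _ Set.subset_union_left)
  · exact (inter_nonempty_of_mem_dualH hY₂ hZ).mono
      (Set.inter_subset_inter_right _ Set.subset_union_right)

theorem exists_bipartition_dualH_subset {𝕏 : Hyperteam Var A} {X X₁ X₂ : Team Var A}
    (hX : X ∈ 𝕏) (hX₁₂ : X₁ ∪ X₂ = X) :
    ∃ 𝕏₁ 𝕏₂ : Hyperteam Var A, Bipartition 𝕏₁ 𝕏₂ (dualH 𝕏) ∧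
      ∃ Y₁ ∈ dualH 𝕏₁, ∃ Y₂ ∈ dualH 𝕏₂, Y₁ ⊆ X₁ ∧ Y₂ ⊆ X₂ := by
  set 𝕄 : Hyperteam Var A := {Y | (Y ∩ X₁).Nonempty}
  have hmeet₁ : ∀ Y ∈ dualH 𝕏 ∩ 𝕄, (Y ∩ X₁).Nonempty := fun Y hY => hY.2
  have hmeet₂ : ∀ Y ∈ dualH 𝕏 \ 𝕄, (Y ∩ X₂).Nonempty := by
    rintro Y ⟨hY, hY₁⟩
    obtain ⟨α, hαX, hαY⟩ := inter_nonempty_of_mem_dualH hY hX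
    rw [← hX₁₂] at hαX
    exact hαX.elim (fun hα₁ => absurd ⟨α, hαY, hα₁⟩ hY₁) fun hα₂ => ⟨α, hαY, hα₂⟩
  obtain ⟨Y₁, hY₁, hY₁X₁⟩ := exists_mem_dualH_subset hmeet₁
  obtain ⟨Y₂, hY₂, hY₂X₂⟩ := exists_mem_dualH_subset hmeet₂
  exact ⟨_, _, bipartition_inter_sdiff _ 𝕄, Y₁, hY₁, Y₂, hY₂, hY₁X₁, hY₂X₂⟩

theorem team_partitioning_general {Var A : Type}
    (𝕏 : Hyperteam Var A) :
    (∀ 𝕏₁ 𝕏₂ : Hyperteam Var A, Bipartition 𝕏₁ 𝕏₂ (dualH 𝕏) →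
      ∀ Y₁ ∈ dualH 𝕏₁, ∀ Y₂ ∈ dualH 𝕏₂, ∃ X ∈ 𝕏, X ⊆ Y₁ ∪ Y₂) ∧
    (∀ X ∈ 𝕏, ∀ X₁ X₂ : Team Var A, X₁ ∩ X₂ = ∅ → X₁ ∪ X₂ = X →
      ∃ 𝕏₁ 𝕏₂ : Hyperteam Var A, Bipartition 𝕏₁ 𝕏₂ (dualH 𝕏) ∧
        ∃ Y₁ ∈ dualH 𝕏₁, ∃ Y₂ ∈ dualH 𝕏₂, Y₁ ⊆ X₁ ∧ Y₂ ⊆ X₂) :=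
  ⟨fun _ _ h _ hY₁ _ hY₂ => exists_subset_union_of_union_eq_dualH h.2 hY₁ hY₂,
    fun _ hX _ _ _ hX₁₂ => exists_bipartition_dualH_subset hX hX₁₂⟩

/-- Team Partitioning. -/
theorem team_partitioning {Var A : Type} [Nonempty A]
    (𝕏 : Hyperteam Var A) (h𝕏 : IsHyperteam 𝕏) :
    (∀ 𝕏₁ 𝕏₂ : Hyperteam Var A, Bipartition 𝕏₁ 𝕏₂ (dualH 𝕏) →
      ∀ Y₁ ∈ dualH 𝕏₁, ∀ Y₂ ∈ dualH 𝕏₂, ∃ X ∈ 𝕏, X ⊆ Y₁ ∪ Y₂) ∧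
    (∀ X ∈ 𝕏, ∀ X₁ X₂ : Team Var A, X₁ ∩ X₂ = ∅ → X₁ ∪ X₂ = X →
      ∃ 𝕏₁ 𝕏₂ : Hyperteam Var A, Bipartition 𝕏₁ 𝕏₂ (dualH 𝕏) ∧
        ∃ Y₁ ∈ dualH 𝕏₁, ∃ Y₂ ∈ dualH 𝕏₂, Y₁ ⊆ X₁ ∧ Y₂ ⊆ X₂) :=
  team_partitioning_general 𝕏

end ADIF
end
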